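/- For any reachable marking M of a t-net and any representation R(M), every data place s ≠ s_η satisfies M(s) = the multiset union over all subtrees ⟨π, t⟩ ∈ Trees(R(M)) of M_t(s). -/

import Mathlib

open scoped Classical

abbrev Pid := List ℕ+

def parentOf (x y : Pid) : Prop := ∃ a : ℕ+, y = x ++ [a]
def ancOf (x y : Pid) : Prop := x <+: y ∧ x ≠ y
def sib1 (x y : Pid) : Prop := ∃ (p : Pid) (i : ℕ+), p ≠ [] ∧ x = p ++ [i] ∧ y = p ++ [i + 1]
def sib (x y : Pid) : Prop := ∃ (p : Pid) (i j : ℕ+), p ≠ [] ∧ i < j ∧ x = p ++ [i] ∧ y = p ++ [j]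
def subpid (x : Pid) : Set Pid := {s | s ≠ [] ∧ s <+: x}
def hle (x y : Pid) : Prop := x.length < y.length ∨ (x.length = y.length ∧ (x = y ∨ List.Lex (· < ·) x y))
def hlt (x y : Pid) : Prop := x.length < y.length ∨ (x.length = y.length ∧ List.Lex (· < ·) x y)

abbrev Token (D : Type) := List (Pid ⊕ D)

def tokenPids {D : Type} (v : Token D) : Set Pid := {π | Sum.inl π ∈ v}

def renamePid {D : Type} (h : Pid → Pid) : Token D → Token D := List.map (Sum.map h id)

structure TMark (S D : Type) where
  data : S → Multiset (Token D)
  gen : Multiset (Pid × ℕ)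

def pidsOf {S D : Type} (M : TMark S D) : Set Pid :=
  {π | ∃ n, (π, n) ∈ M.gen} ∪ {π | ∃ s, ∃ v ∈ M.data s, Sum.inl π ∈ v}

def domOf {S D : Type} (M : TMark S D) : Set Pid := {π | ∃ n, (π, n) ∈ M.gen}

def nexts {S D : Type} (M : TMark S D) : Set Pid :=
  {ρ | ∃ π n, (π, n) ∈ M.gen ∧ ρ = π ++ [⟨n + 1, n.succ_pos⟩]}

def subpidsOf {S D : Type} (M : TMark S D) : Set Pid :=
  {σ | ∃ π ∈ pidsOf M, σ ∈ subpid π}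

inductive PidTerm where
  | gen (idx : ℕ)
  | new (idx : ℕ) (j : ℕ+)

def evalPT (ps : List (Pid × ℕ)) : PidTerm → Pid
  | .gen idx => ((ps[idx]?).getD ([], 0)).1
  | .new idx j =>
      let pc := (ps[idx]?).getD ([], 0)
      pc.1 ++ [⟨pc.2 + (j : ℕ), Nat.add_pos_right _ j.2⟩]

inductive Guard (V D : Type) where
  | tt
  | and (g₁ g₂ : Guard V D)
  | not (g : Guard V D)
  | eq (x y : PidTerm)
  | anc1 (x y : PidTerm)
  | anc (x y : PidTerm)
  | sb1 (x y : PidTerm)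
  | sb (x y : PidTerm)
  | dpred (f : (V → Option D) → Prop)

def dproj {V D : Type} (β : V → Pid ⊕ D) : V → Option D := fun v =>
  match β v with
  | Sum.inr d => some d
  | Sum.inl _ => none

def gsat {V D : Type} (β : V → Pid ⊕ D) (ps : List (Pid × ℕ)) : Guard V D → Prop
  | .tt => True
  | .and g₁ g₂ => gsat β ps g₁ ∧ gsat β ps g₂
  | .not g => ¬ gsat β ps g
  | .eq x y => evalPT ps x = evalPT ps y
  | .anc1 x y => parentOf (evalPT ps x) (evalPT ps y)
  | .anc x y => ancOf (evalPT ps x) (evalPT ps y)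
  | .sb1 x y => sib1 (evalPT ps x) (evalPT ps y)
  | .sb x y => sib (evalPT ps x) (evalPT ps y)
  | .dpred f => f (dproj β)

inductive OutExpr (V D : Type) where
  | pid (tm : PidTerm)
  | dat (d : D)
  | fn (f : (V → Option D) → D)

def evalOut {V D : Type} (β : V → Pid ⊕ D) (ps : List (Pid × ℕ)) : OutExpr V D → Pid ⊕ D
  | .pid tm => Sum.inl (evalPT ps tm)
  | .dat d => Sum.inr d
  | .fn f => Sum.inr (f (dproj β))

def evalIn {V D : Type} (β : V → Pid ⊕ D) (pat : List (V ⊕ D)) : Token D :=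
  pat.map (fun e => match e with | Sum.inl v => β v | Sum.inr d => Sum.inr d)

structure TNet (S T V D : Type) where
  inArc : S → T → Multiset (List (V ⊕ D))
  outArc : T → S → Multiset (List (OutExpr V D))
  genIn : T → List V
  keep : T → ℕ
  spawn : T → List ℕ
  guard : T → Guard V D

def genOut {S T V D : Type} (N : TNet S T V D) (t : T) (ps : List (Pid × ℕ)) :
    Multiset (Pid × ℕ) :=
  (((List.range (N.keep t)).filterMap fun i =>
      (ps[i]?).map fun pc => (pc.1, pc.2 + (N.spawn t).getD i 0)) : List (Pid × ℕ))
  + ((((List.range ps.length).flatMap fun i =>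
      (List.range ((N.spawn t).getD i 0)).map fun j =>
        ((((ps.getD i ([], 0)).1 ++
          ([⟨(ps.getD i ([], 0)).2 + j + 1, Nat.succ_pos _⟩] : Pid), 0) : Pid × ℕ))) : List (Pid × ℕ)))

def Fire {S T V D : Type} (N : TNet S T V D) (M : TMark S D) (t : T)
    (β : V → Pid ⊕ D) (M' : TMark S D) : Prop :=
  ∃ ps : List (Pid × ℕ),
    List.Forall₂ (fun v pc => β v = Sum.inl pc.1) (N.genIn t) ps ∧
    (ps : Multiset (Pid × ℕ)) ≤ M.gen ∧
    gsat β ps (N.guard t) ∧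
    (∀ s, (N.inArc s t).map (evalIn β) ≤ M.data s) ∧
    (∀ s, M'.data s = M.data s - (N.inArc s t).map (evalIn β)
        + (N.outArc t s).map (fun l => l.map (evalOut β ps))) ∧
    M'.gen = M.gen - (ps : Multiset (Pid × ℕ)) + genOut N t ps

def Init {S D : Type} (M : TMark S D) : Prop :=
  M.gen = {([(1 : ℕ+)], 0)} ∧ ∀ s, ∀ v ∈ M.data s, ∀ x ∈ v, ∃ d, x = Sum.inr d

def Reachable {S T V D : Type} (N : TNet S T V D) (M : TMark S D) : Prop :=
  ∃ M₀, Init M₀ ∧ Relation.ReflTransGen (fun a b => ∃ t β, Fire N a t β b) M₀ M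

def MarkEquivVia {S D : Type} (h : Pid → Pid) (M M' : TMark S D) : Prop :=
  Set.BijOn h (pidsOf M ∪ nexts M) (pidsOf M' ∪ nexts M') ∧
  h '' domOf M = domOf M' ∧
  (∀ π n, (π, n) ∈ M.gen →
    ∃ n', (h π, n') ∈ M'.gen ∧
      h (π ++ [⟨n + 1, n.succ_pos⟩]) = h π ++ [⟨n' + 1, n'.succ_pos⟩]) ∧
  (∀ x ∈ pidsOf M, ∀ y ∈ pidsOf M,
    (parentOf x y ↔ parentOf (h x) (h y)) ∧ (ancOf x y ↔ ancOf (h x) (h y))) ∧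
  (∀ x ∈ pidsOf M ∪ nexts M, ∀ y ∈ pidsOf M ∪ nexts M,
    (sib1 x y ↔ sib1 (h x) (h y)) ∧ (sib x y ↔ sib (h x) (h y))) ∧
  (∀ s, M'.data s = (M.data s).map (renamePid h))

def MarkEquiv {S D : Type} (M M' : TMark S D) : Prop := ∃ h, MarkEquivVia h M M'

inductive PidTree (S D : Type) where
  | node : (S → Multiset (Token D)) → List (Pid × PidTree S D) → PidTree S D

def rootMark {S D : Type} : PidTree S D → S → Multiset (Token D)
  | .node m _ => m

inductive WF {S D : Type} : PidTree S D → Prop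
  | mk {m : S → Multiset (Token D)} {cs : List (Pid × PidTree S D)} :
      (∀ p ∈ cs, p.1 ≠ []) →
      List.Pairwise (fun p q : Pid × PidTree S D => ¬ p.1 <+: q.1 ∧ ¬ q.1 <+: p.1) cs →
      (∀ p ∈ cs, WF p.2) → WF (.node m cs)

inductive SOrd {S D : Type} : PidTree S D → Prop
  | mk {m : S → Multiset (Token D)} {cs : List (Pid × PidTree S D)} :
      List.Chain' (fun p q : Pid × PidTree S D => hlt p.1 q.1) cs →
      (∀ p ∈ cs, SOrd p.2) → SOrd (.node m cs)

inductive SubtreeAt {S D : Type} : PidTree S D → Pid → PidTree S D → Prop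
  | refl (t : PidTree S D) : SubtreeAt t [] t
  | step {m : S → Multiset (Token D)} {cs : List (Pid × PidTree S D)}
      {a : Pid} {c : PidTree S D} {π : Pid} {t : PidTree S D} :
      (a, c) ∈ cs → SubtreeAt c π t → SubtreeAt (.node m cs) (a ++ π) t

def pidSet {S D : Type} (T : PidTree S D) : Set Pid :=
  {π | π ≠ [] ∧ ∃ t, SubtreeAt T π t}

inductive RelPath {S D : Type} : PidTree S D → Pid → List ℕ → Prop
  | base {m : S → Multiset (Token D)} {cs : List (Pid × PidTree S D)}
      {i : ℕ} {a : Pid} {c : PidTree S D} :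
      cs[i]? = some (a, c) → RelPath (.node m cs) a [i]
  | step {m : S → Multiset (Token D)} {cs : List (Pid × PidTree S D)}
      {i : ℕ} {a : Pid} {c : PidTree S D} {π : Pid} {r : List ℕ} :
      cs[i]? = some (a, c) → π ≠ [] → RelPath c π r → RelPath (.node m cs) (a ++ π) (i :: r)

def ownerLoc {D : Type} (v : Token D) : Pid :=
  match v with
  | Sum.inl π :: _ => π
  | _ => []

def ReprOf {S D : Type} (M : TMark S D) (R : PidTree S D) : Prop :=
  WF R ∧ SOrd R ∧
  (∀ π n, (π, n) ∈ M.gen → π ∈ pidSet R ∧ π ++ [⟨n + 1, n.succ_pos⟩] ∈ pidSet R) ∧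
  (∀ s, ∀ v ∈ M.data s, ∀ π, Sum.inl π ∈ v → π ∈ pidSet R) ∧
  (∀ π t, SubtreeAt R π t →
    ∀ s, rootMark t s = (M.data s).filter (fun v => ownerLoc v = π)) ∧
  pidSet R ⊆ subpidsOf M ∪ nexts M

def lastN (x : Pid) : ℕ := ((x.getLast?).map (fun i => (i : ℕ))).getD 0

def NodeMatch {S D : Type} (hf : Pid → Pid) : PidTree S D → PidTree S D → Prop
  | .node m cs, .node m' cs' =>
    cs.length = cs'.length ∧
    (∀ s, m' s = (m s).map (renamePid hf)) ∧
    (∀ (i : ℕ) (a : Pid) (c : PidTree S D) (a' : Pid) (c' : PidTree S D),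
      cs[i]? = some (a, c) → cs'[i]? = some (a', c') →
      (a.length = 1 ↔ a'.length = 1)) ∧
    (∀ (i : ℕ) (a : Pid) (c : PidTree S D) (b : Pid) (e : PidTree S D)
      (a' : Pid) (c' : PidTree S D) (b' : Pid) (e' : PidTree S D),
      cs[i]? = some (a, c) → cs[i+1]? = some (b, e) →
      cs'[i]? = some (a', c') → cs'[i+1]? = some (b', e') →
      a.dropLast = b.dropLast →
      (a'.dropLast = b'.dropLast ∧ (lastN b - lastN a = 1 ↔ lastN b' - lastN a' = 1)))

def TreeEquivVia {S D : Type} (hf : Pid → Pid) (T T' : PidTree S D) : Prop :=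
  (∀ π ∈ pidSet T, hf π ∈ pidSet T' ∧ ∃ r, RelPath T π r ∧ RelPath T' (hf π) r) ∧
  (∀ π' ∈ pidSet T', ∃ π ∈ pidSet T, hf π = π') ∧
  Set.InjOn hf (pidSet T) ∧
  (∀ π π' t t', SubtreeAt T π t → SubtreeAt T' π' t' →
    ((π = [] ∧ π' = []) ∨ (π ∈ pidSet T ∧ π' = hf π)) → NodeMatch hf t t')

def TreeEquiv {S D : Type} (T T' : PidTree S D) : Prop := ∃ hf, TreeEquivVia hf T T'

def treeSum {S D : Type} : PidTree S D → S → Multiset (Token D)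
  | .node m cs => fun s => m s + (cs.attach.map (fun p => treeSum p.1.2 s)).sum
  termination_by t => sizeOf t
  decreasing_by
    obtain ⟨⟨a, b⟩, hp⟩ := p
    have hm := List.sizeOf_lt_of_mem hp
    simp only [Prod.mk.sizeOf_spec] at hm
    simp only [PidTree.node.sizeOf_spec]
    omega

lemma partition_aux {D : Type} (f : Token D → Pid) :
    ∀ (l : List Pid) (X : Multiset (Token D)),
      l.Pairwise (fun a b => ¬ a <+: b ∧ ¬ b <+: a) →
      (∀ v ∈ X, ∃ a ∈ l, a <+: f v) →
      (l.map (fun a => X.filter (fun v => a <+: f v))).sum = X := by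
  intro l
  induction l with
  | nil =>
      intro X _ hcov
      simp only [List.map_nil, List.sum_nil]
      symm
      rw [Multiset.eq_zero_iff_forall_notMem]
      intro v hv
      obtain ⟨a, ha, _⟩ := hcov v hv
      exact List.not_mem_nil ha
  | cons a l ih =>
      intro X hpw hcov
      have hpw' := hpw.of_cons
      have hhead : ∀ b ∈ l, ¬ a <+: b ∧ ¬ b <+: a := by
        intro b hb; exact (List.pairwise_cons.mp hpw).1 b hb
      set X' := X.filter (fun v => ¬ a <+: f v) with hX'
      have hstep : ∀ b ∈ l, X.filter (fun v => b <+: f v)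
          = X'.filter (fun v => b <+: f v) := by
        intro b hb
        rw [hX', Multiset.filter_filter]
        apply Multiset.filter_congr
        intro v _
        constructor
        · intro hbv
          refine ⟨hbv, ?_⟩
          intro hav
          rcases List.prefix_or_prefix_of_prefix hav hbv with h | h
          · exact (hhead b hb).1 h
          · exact (hhead b hb).2 h
        · exact fun h => h.1
      have hmap : l.map (fun b => X.filter (fun v => b <+: f v))
          = l.map (fun b => X'.filter (fun v => b <+: f v)) :=
        List.map_congr_left hstep
      have hcov' : ∀ v ∈ X', ∃ b ∈ l, b <+: f v := by
        intro v hv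
        rw [hX', Multiset.mem_filter] at hv
        obtain ⟨c, hc, hcv⟩ := hcov v hv.1
        rcases List.mem_cons.mp hc with rfl | hcl
        · exact absurd hcv hv.2
        · exact ⟨c, hcl, hcv⟩
      have := ih X' hpw' hcov'
      simp only [List.map_cons, List.sum_cons, hmap, this]
      exact Multiset.filter_add_not _ _

lemma subtreeAt_node_inv {S D : Type} {m : S → Multiset (Token D)}
    {cs : List (Pid × PidTree S D)} {ρ : Pid} {t : PidTree S D}
    (h : SubtreeAt (.node m cs) ρ t) :
    (ρ = [] ∧ t = .node m cs) ∨
      ∃ b e σ, (b, e) ∈ cs ∧ ρ = b ++ σ ∧ SubtreeAt e σ t := by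
  cases h with
  | refl => exact Or.inl ⟨rfl, rfl⟩
  | step hmem hsub => exact Or.inr ⟨_, _, _, hmem, rfl, hsub⟩

lemma treeSum_eq_of_filter {S D : Type} (s : S) :
    ∀ (Tr : PidTree S D), WF Tr → ∀ (f : Token D → Pid) (X : Multiset (Token D)),
      (∀ π t, SubtreeAt Tr π t → rootMark t s = X.filter (fun v => f v = π)) →
      (∀ v ∈ X, f v = [] ∨ f v ∈ pidSet Tr) →
      treeSum Tr s = X := by
  intro Tr hWF
  induction hWF with
  | @mk m cs h1 h2 h3 ih =>
    intro f X hroot hcov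
    -- root marking
    have hrootm : m s = X.filter (fun v => f v = []) := by
      have := hroot [] (.node m cs) (SubtreeAt.refl _)
      simpa [rootMark] using this
    -- uniqueness of the child an element belongs to
    have huniq : ∀ p ∈ cs, ∀ q ∈ cs, p.1 <+: q.1 ∨ q.1 <+: p.1 → p = q := by
      intro p hp q hq hcomp
      by_contra hne
      have hsym : Symmetric (fun p q : Pid × PidTree S D => ¬ p.1 <+: q.1 ∧ ¬ q.1 <+: p.1) := by
        intro x y h; exact ⟨h.2, h.1⟩
      have := (haveI : Std.Symm (fun p q : Pid × PidTree S D => ¬ p.1 <+: q.1 ∧ ¬ q.1 <+: p.1) := ⟨fun _ _ h => hsym h⟩; h2.forall hp hq hne)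
      rcases hcomp with h | h
      · exact this.1 h
      · exact this.2 h
    -- each child subtree sums to the corresponding filter
    have hchild : ∀ p ∈ cs, treeSum p.2 s = X.filter (fun v => p.1 <+: f v) := by
      intro p hp
      obtain ⟨a, c⟩ := p
      apply ih (a, c) hp (fun v => (f v).drop a.length)
      · intro π t hsub
        have hAt : SubtreeAt (.node m cs) (a ++ π) t := SubtreeAt.step hp hsub
        have := hroot (a ++ π) t hAt
        rw [this, Multiset.filter_filter]
        apply Multiset.filter_congr
        intro v _
        constructor
        · intro hv
          refine ⟨by rw [hv, List.drop_left], by rw [hv]; exact ⟨π, rfl⟩⟩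
        · rintro ⟨hd, hpref⟩
          obtain ⟨u, hu⟩ := hpref
          rw [← hu, ← hd, ← hu, List.drop_left]
      · intro v hv
        rw [Multiset.mem_filter] at hv
        obtain ⟨hvX, hav⟩ := hv
        rcases hcov v hvX with hnil | hpid
        · exfalso
          rw [hnil] at hav
          exact h1 (a, c) hp (List.prefix_nil.mp hav)
        · obtain ⟨hne, t, hsub⟩ := hpid
          rcases subtreeAt_node_inv hsub with ⟨h0, _⟩ | ⟨b, e, σ, hbe, hfv, hsub'⟩
          · exact absurd h0 hne
          · have hbpre : b <+: f v := ⟨σ, hfv.symm⟩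
            have heq : (a, c) = (b, e) :=
              huniq (a, c) hp (b, e) hbe (List.prefix_or_prefix_of_prefix hav hbpre)
            have ha : a = b := congrArg Prod.fst heq
            subst ha
            have hdrop : (f v).drop a.length = σ := by
              rw [hfv]; exact List.drop_left
            rw [hdrop]
            by_cases hσ : σ = []
            · exact Or.inl hσ
            · have hce : c = e := congrArg Prod.snd heq
              exact Or.inr ⟨hσ, t, hce ▸ hsub'⟩
    -- rewrite the attach sum
    have hsum : (cs.attach.map (fun p => treeSum p.1.2 s)).sum
        = (cs.map (fun p => X.filter (fun v => p.1 <+: f v))).sum := by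
      have : cs.attach.map (fun p => treeSum p.1.2 s)
          = cs.attach.map (fun p => X.filter (fun v => p.1.1 <+: f v)) := by
        apply List.map_congr_left
        intro p _
        exact hchild p.1 p.2
      rw [this]
      exact congrArg List.sum
        (List.attach_map_val (l := cs) (f := fun p => X.filter (fun v => p.1 <+: f v)))
    -- partition
    have hpw' : (cs.map Prod.fst).Pairwise (fun a b => ¬ a <+: b ∧ ¬ b <+: a) := by
      apply List.Pairwise.map _ _ h2
      intro p q h
      exact h
    have hcovne : ∀ v ∈ X.filter (fun v => ¬ f v = []),
        ∃ a ∈ cs.map Prod.fst, a <+: f v := by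
      intro v hv
      rw [Multiset.mem_filter] at hv
      rcases hcov v hv.1 with hnil | hpid
      · exact absurd hnil hv.2
      · obtain ⟨hne, t, hsub⟩ := hpid
        rcases subtreeAt_node_inv hsub with ⟨h0, _⟩ | ⟨b, e, σ, hbe, hfv, hsub'⟩
        · exact absurd h0 hne
        · exact ⟨b, List.mem_map_of_mem (f := Prod.fst) hbe, σ, hfv.symm⟩
    have hpart := partition_aux f (cs.map Prod.fst) (X.filter (fun v => ¬ f v = []))
      hpw' hcovne
    have hfilt : ∀ p ∈ cs,
        (X.filter (fun v => ¬ f v = [])).filter (fun v => p.1 <+: f v)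
          = X.filter (fun v => p.1 <+: f v) := by
      intro p hp
      rw [Multiset.filter_filter]
      apply Multiset.filter_congr
      intro v _
      constructor
      · exact fun h => h.1
      · intro h
        refine ⟨h, ?_⟩
        intro hnil
        rw [hnil] at h
        exact h1 p hp (List.prefix_nil.mp h)
    have hpart' : (cs.map (fun p => X.filter (fun v => p.1 <+: f v))).sum
        = X.filter (fun v => ¬ f v = []) := by
      rw [← hpart, List.map_map]
      congr 1
      apply List.map_congr_left
      intro p hp
      exact (hfilt p hp).symm
    rw [treeSum]
    show m s + (cs.attach.map (fun p => treeSum p.1.2 s)).sum = X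
    rw [hrootm, hsum, hpart']
    exact Multiset.filter_add_not _ _

theorem marking_is_union_of_tree_markings {S T V D : Type} (N : TNet S T V D)
    (M : TMark S D) (R : PidTree S D) (hM : Reachable N M) (hR : ReprOf M R) :
    ∀ s, M.data s = treeSum R s := by
  intro s
  obtain ⟨hWF, _, _, hpids, hmarks, _⟩ := hR
  symm
  apply treeSum_eq_of_filter s R hWF ownerLoc (M.data s)
  · intro π t hsub
    exact hmarks π t hsub s
  · intro v hv
    match hveq : v with
    | [] => exact Or.inl rfl
    | (Sum.inl π) :: rest =>
        right
        exact hpids s v (hveq ▸ hv) π (hveq ▸ List.mem_cons_self)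
    | (Sum.inr d) :: rest => exact Or.inl rfl
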